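/- arXiv:1803.09624 — 4 statements merged into one kernel-verified Lean document; each statement's English description precedes it below -/
import Mathlib

section
/- In a fuzzy soft topological space, a fuzzy soft point e_x^α belongs to the closure of a fuzzy soft set f if and only if every fuzzy soft open Q-neighborhood of e_x^α is quasi-coincident with f. -/
open unitInterval

instance : Fact ((0:ℝ) ≤ 1) := ⟨zero_le_one⟩

/-- A fuzzy soft set over `(X, E)` is a map `E → X → [0,1]`. -/
abbrev FSS (X E : Type*) := E → X → I

/-- Quasi-coincidence of two fuzzy soft sets. -/
def FSS.QCoin {X E : Type*} (f g : FSS X E) : Prop :=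
  ∃ e x, 1 < (f e x : ℝ) + (g e x : ℝ)

/-- Complement of a fuzzy soft set. -/
noncomputable def FSS.compl {X E : Type*} (f : FSS X E) : FSS X E :=
  fun e x => symm (f e x)

open scoped Classical in
/-- The fuzzy soft point `e_x^α`. -/
noncomputable def fsPoint {X E : Type*} (e : E) (x : X) (α : I) : FSS X E :=
  fun e' x' => if e' = e ∧ x' = x then α else 0

/-- Preimage of a fuzzy soft set under the fuzzy soft mapping `(u, p)`. -/
def fsPreimage {X E Y K : Type*} (u : X → Y) (p : E → K) (g : FSS Y K) : FSS X E :=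
  fun e x => g (p e) (u x)

/-- Image of a fuzzy soft set under the fuzzy soft mapping `(u, p)`. -/
noncomputable def fsImage {X E Y K : Type*} (u : X → Y) (p : E → K) (f : FSS X E) : FSS Y K :=
  fun k y => ⨆ x ∈ u ⁻¹' {y}, ⨆ e ∈ p ⁻¹' {k}, f e x

/-- A fuzzy soft topology on `(X, E)`. -/
structure FSTopology (X E : Type*) where
  opens : Set (FSS X E)
  univ_mem : (fun _ _ => 1) ∈ opens
  null_mem : (fun _ _ => 0) ∈ opens
  inter_mem : ∀ f g, f ∈ opens → g ∈ opens → (fun e x => f e x ⊓ g e x) ∈ opens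
  sSup_mem : ∀ S ⊆ opens, (fun e x => ⨆ f ∈ S, f e x) ∈ opens

/-- A fuzzy soft set is closed iff its complement is open. -/
def FSTopology.IsClosed {X E : Type*} (τ : FSTopology X E) (f : FSS X E) : Prop :=
  f.compl ∈ τ.opens

/-- Closure: the pointwise infimum of all closed supersets. -/
noncomputable def FSTopology.closure {X E : Type*} (τ : FSTopology X E) (f : FSS X E) :
    FSS X E :=
  fun e x => ⨅ g ∈ {g : FSS X E | τ.IsClosed g ∧ f ≤ g}, g e x

namespace FSS

variable {X E : Type*}

theorem coe_compl_apply (f : FSS X E) (e : E) (x : X) : (f.compl e x : ℝ) = 1 - f e x :=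
  coe_symm_eq _

@[simp]
theorem compl_compl (f : FSS X E) : f.compl.compl = f := by
  funext e x
  exact symm_symm _

theorem le_compl_apply_iff {f : FSS X E} {e : E} {x : X} {α : I} :
    α ≤ f.compl e x ↔ (α : ℝ) + f e x ≤ 1 := by
  rw [← Subtype.coe_le_coe, coe_compl_apply]
  constructor <;> intro h <;> linarith

theorem le_compl_iff_not_qCoin {f h : FSS X E} : f ≤ h.compl ↔ ¬ h.QCoin f := by
  simp only [QCoin, not_exists, not_lt, Pi.le_def, le_compl_apply_iff, add_comm]

end FSS

namespace FSTopology

variable {X E : Type*} (τ : FSTopology X E)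

theorem forall_isClosed_iff {P : FSS X E → Prop} :
    (∀ g, τ.IsClosed g → P g) ↔ ∀ h ∈ τ.opens, P h.compl := by
  refine ⟨fun hP h hh => hP _ ?_, fun hP g hg => ?_⟩
  · rwa [IsClosed, FSS.compl_compl]
  · simpa using hP _ hg

theorem le_closure_apply_iff {f : FSS X E} {e : E} {x : X} {α : I} :
    α ≤ τ.closure f e x ↔ ∀ g, τ.IsClosed g → f ≤ g → α ≤ g e x := by
  simp only [closure, le_iInf₂_iff, Set.mem_ofPred_eq, and_imp]

end FSTopology

theorem mem_closure_iff_qnbd_qcoin_general {X E : Type*} (τ : FSTopology X E)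
    (f : FSS X E) (e : E) (x : X) (α : I) :
    α ≤ τ.closure f e x ↔
      ∀ h ∈ τ.opens, 1 < (α : ℝ) + h e x → h.QCoin f := by
  rw [τ.le_closure_apply_iff, τ.forall_isClosed_iff]
  refine forall₂_congr fun h _ => ?_
  rw [FSS.le_compl_iff_not_qCoin, FSS.le_compl_apply_iff, ← not_lt, not_imp_not]

theorem mem_closure_iff_qnbd_qcoin {X E : Type*} (τ : FSTopology X E)
    (f : FSS X E) (e : E) (x : X) (α : I) (hα : 0 < α) :
    α ≤ τ.closure f e x ↔
      ∀ h ∈ τ.opens, 1 < (α : ℝ) + h e x → h.QCoin f :=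
  mem_closure_iff_qnbd_qcoin_general τ f e x α
end

section
/- A fuzzy soft topological space (X,τ) is fuzzy soft q-T₁ if and only if every fuzzy soft point e_x^α is a fuzzy soft closed set. -/
open unitInterval

/-- Fuzzy soft `q`-`T₁`. -/
def FSTopology.QT1 {X E : Type*} (τ : FSTopology X E) : Prop :=
  ∀ (e₁ e₂ : E) (x y : X) (α β : I), 0 < α → 0 < β →
    ((e₁ ≠ e₂ ∨ x ≠ y) →
      (∃ f ∈ τ.opens, α ≤ f e₁ x ∧ (f e₂ y : ℝ) + β ≤ 1) ∧
      (∃ g ∈ τ.opens, β ≤ g e₂ y ∧ (g e₁ x : ℝ) + α ≤ 1)) ∧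
    ((e₁ = e₂ ∧ x = y ∧ α < β) →
      ∃ f ∈ τ.opens, 1 < (β : ℝ) + f e₂ y ∧ (α : ℝ) + f e₁ x ≤ 1)

/-!
The complement of `e_x^α` is `1` off `(e, x)` and `1 - α` at `(e, x)`. If points are closed, these
complements are the open sets that `q`-`T₁` asks for. Conversely, `q`-`T₁` produces, at every
`(e', x')` and below every level `r` of the complement `g` of `e_x^α`, an open set `f ≤ g` exceeding
`r` at `(e', x')`; so `g` is the supremum of the open sets below it and hence open.
-/

namespace FSTopology

variable {X E : Type*}

theorem mem_opens_of_forall_lt (τ : FSTopology X E) {g : FSS X E}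
    (h : ∀ e x, ∀ r < g e x, ∃ f ∈ τ.opens, f ≤ g ∧ r < f e x) : g ∈ τ.opens := by
  convert τ.sSup_mem {f | f ∈ τ.opens ∧ f ≤ g} fun f hf => hf.1 using 1
  funext e x
  refine le_antisymm (le_of_forall_lt fun r hr => ?_) (iSup₂_le fun f hf => hf.2 e x)
  obtain ⟨f, hf, hfg, hrf⟩ := h e x r hr
  exact hrf.trans_le (le_iSup₂_of_le f ⟨hf, hfg⟩ le_rfl)

end FSTopology

section fsPoint

variable {X E : Type*} {e e' : E} {x x' : X} {α : I}

theorem compl_fsPoint_apply_self : ((fsPoint e x α).compl e x : ℝ) = 1 - α := by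
  simp [FSS.compl, fsPoint, coe_symm_eq]

theorem compl_fsPoint_apply_of_ne (h : e' ≠ e ∨ x' ≠ x) : (fsPoint e x α).compl e' x' = 1 := by
  have : ¬(e' = e ∧ x' = x) := by tauto
  simp [FSS.compl, fsPoint, this]

theorem le_compl_fsPoint_iff {f : FSS X E} : f ≤ (fsPoint e x α).compl ↔ (f e x : ℝ) + α ≤ 1 := by
  refine ⟨fun h => ?_, fun h e' x' => ?_⟩
  · have := Subtype.coe_le_coe.mpr (h e x)
    rw [compl_fsPoint_apply_self] at this
    linarith
  · by_cases hp : e' = e ∧ x' = x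
    · obtain ⟨rfl, rfl⟩ := hp
      rw [← Subtype.coe_le_coe, compl_fsPoint_apply_self]
      linarith
    · rw [compl_fsPoint_apply_of_ne (by tauto)]
      exact le_one'

end fsPoint

namespace FSTopology

variable {X E : Type*} {τ : FSTopology X E}

theorem QT1.isClosed_fsPoint (hτ : τ.QT1) {e : E} {x : X} {α : I} (hα : 0 < α) :
    τ.IsClosed (fsPoint e x α) := by
  refine τ.mem_opens_of_forall_lt fun e' x' r hr => ?_
  by_cases hp : e' = e ∧ x' = x
  · -- A `Q`-neighbourhood of `e_x^{1-r}` exceeds `r` at `(e, x)`.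
    obtain ⟨rfl, rfl⟩ := hp
    have hr' : (r : ℝ) < 1 - α := by rwa [← Subtype.coe_lt_coe, compl_fsPoint_apply_self] at hr
    have hαβ : α < σ r := by rw [← Subtype.coe_lt_coe, coe_symm_eq]; linarith
    obtain ⟨f, hf, hf_gt, hf_le⟩ := (hτ e' e' x' x' α (σ r) hα (hα.trans hαβ)).2 ⟨rfl, rfl, hαβ⟩
    rw [coe_symm_eq] at hf_gt
    refine ⟨f, hf, le_compl_fsPoint_iff.mpr (by linarith), ?_⟩
    rw [← Subtype.coe_lt_coe]
    linarith
  · -- Separating `e'_{x'}^1` from `e_x^α` gives `f e' x' = 1`, above every `r < 1`.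
    obtain ⟨⟨f, hf, hf_one, hf_le⟩, -⟩ := (hτ e' e x' x 1 α one_pos hα).1 (by tauto)
    rw [compl_fsPoint_apply_of_ne (by tauto)] at hr
    exact ⟨f, hf, le_compl_fsPoint_iff.mpr hf_le, hr.trans_le hf_one⟩

theorem qT1_of_isClosed_fsPoint
    (h : ∀ (e : E) (x : X) (α : I), 0 < α → τ.IsClosed (fsPoint e x α)) : τ.QT1 := by
  intro e₁ e₂ x y α β hα hβ
  refine ⟨fun hne => ⟨?_, ?_⟩, ?_⟩
  · refine ⟨_, h e₂ y β hβ, ?_, le_of_eq ?_⟩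
    · rw [compl_fsPoint_apply_of_ne (by tauto)]
      exact le_one'
    · rw [compl_fsPoint_apply_self, sub_add_cancel]
  · refine ⟨_, h e₁ x α hα, ?_, le_of_eq ?_⟩
    · rw [compl_fsPoint_apply_of_ne (by tauto)]
      exact le_one'
    · rw [compl_fsPoint_apply_self, sub_add_cancel]
  · rintro ⟨rfl, rfl, hαβ⟩
    refine ⟨_, h e₁ x α hα, ?_, le_of_eq ?_⟩
    · rw [compl_fsPoint_apply_self]
      linarith [Subtype.coe_lt_coe.mpr hαβ]
    · rw [compl_fsPoint_apply_self, add_sub_cancel]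

end FSTopology

theorem qT1_iff_points_closed {X E : Type*} (τ : FSTopology X E) :
    τ.QT1 ↔ ∀ (e : E) (x : X) (α : I), 0 < α → τ.IsClosed (fsPoint e x α) :=
  ⟨fun hτ _ _ _ hα => hτ.isClosed_fsPoint hα, FSTopology.qT1_of_isClosed_fsPoint⟩
end

section
/- Let (X,τ₁) and (Y,τ₂) be fuzzy soft topological spaces with (Y,τ₂) fuzzy soft q-T₂, and let (u,p) with u : X → Y injective, p : E → K injective define a fuzzy soft continuous mapping (preimages of open sets are open). Then (X,τ₁) is fuzzy soft q-T₂. -/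
open unitInterval

/-- Fuzzy soft `q`-`T₂`. -/
def FSTopology.QT2 {X E : Type*} (τ : FSTopology X E) : Prop :=
  ∀ (e₁ e₂ : E) (x y : X) (α β : I), 0 < α → 0 < β →
    ((e₁ ≠ e₂ ∨ x ≠ y) →
      ∃ f ∈ τ.opens, ∃ g ∈ τ.opens, α ≤ f e₁ x ∧ β ≤ g e₂ y ∧ ¬ f.QCoin g) ∧
    ((e₁ = e₂ ∧ x = y ∧ α < β) →
      ∃ f ∈ τ.opens, ∃ g ∈ τ.opens, α ≤ f e₁ x ∧ 1 < (β : ℝ) + g e₂ y ∧ ¬ f.QCoin g)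

/-- Fuzzy soft continuity of the fuzzy soft mapping `(u, p)`. -/
def FSContinuous {X E Y K : Type*} (τ₁ : FSTopology X E) (τ₂ : FSTopology Y K)
    (u : X → Y) (p : E → K) : Prop :=
  ∀ g ∈ τ₂.opens, fsPreimage u p g ∈ τ₁.opens

/-! Pull the separating open sets back along `(u, p)`: injectivity keeps distinct fuzzy soft
points distinct, continuity makes the pullbacks open, and a quasi-coincidence of the pullbacks
at `(e, x)` would be one of the original sets at `(p e, u x)`. -/

theorem FSS.QCoin.of_fsPreimage {X E Y K : Type*} {u : X → Y} {p : E → K} {f g : FSS Y K}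
    (h : (fsPreimage u p f).QCoin (fsPreimage u p g)) : f.QCoin g :=
  let ⟨e, x, hex⟩ := h
  ⟨p e, u x, hex⟩

theorem qT2_of_injective_continuous {X E Y K : Type*}
    (τ₁ : FSTopology X E) (τ₂ : FSTopology Y K) (u : X → Y) (p : E → K)
    (hu : Function.Injective u) (hp : Function.Injective p)
    (hcont : FSContinuous τ₁ τ₂ u p) (hT2 : τ₂.QT2) : τ₁.QT2 := by
  intro e₁ e₂ x y α β hα hβ
  obtain ⟨hdistinct, hsame⟩ := hT2 (p e₁) (p e₂) (u x) (u y) α β hα hβ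
  refine ⟨fun hne => ?_, ?_⟩
  · obtain ⟨f, hf, g, hg, hfx, hgy, hfg⟩ := hdistinct (hne.imp hp.ne hu.ne)
    exact ⟨_, hcont f hf, _, hcont g hg, hfx, hgy, mt FSS.QCoin.of_fsPreimage hfg⟩
  · rintro ⟨rfl, rfl, hαβ⟩
    obtain ⟨f, hf, g, hg, hfx, hgy, hfg⟩ := hsame ⟨rfl, rfl, hαβ⟩
    exact ⟨_, hcont f hf, _, hcont g hg, hfx, hgy, mt FSS.QCoin.of_fsPreimage hfg⟩
end

section
/- For a fuzzy soft mapping (u,p) between fuzzy soft topological spaces (X,τ₁) and (Y,τ₂): (u,p) is fuzzy soft continuous if and only if for every fuzzy soft point e_x^α of (X,E) and every open Q-neighborhood g of its image point p(e)_{u(x)}^α in (Y,τ₂), there exists an open Q-neighborhood f of e_x^α in (X,τ₁) with image of f ⊑ g. -/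
open unitInterval

/-!
Image and preimage form a Galois connection, so `fsPreimage u p g` is itself an open
Q-neighborhood of `e_x^α` whose image lies below `g`. Conversely, a fuzzy soft set is the
supremum of the open sets below it once each of its Q-neighborhood tests can be met by one of
them: a degree `b` is at most `a` as soon as every `α > 0` with `α + b > 1` has `α + a > 1`
(try `α = 1 - a`).
-/

theorem fsImage_gc {X E Y K : Type*} (u : X → Y) (p : E → K) :
    GaloisConnection (fsImage u p) (fsPreimage u p) := by
  intro f g
  constructor
  · intro hfg e x
    refine le_trans ?_ (hfg (p e) (u x))
    exact le_iSup₂_of_le x rfl (le_iSup₂_of_le e rfl le_rfl)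
  · rintro hfg k y
    refine iSup₂_le fun x hx => iSup₂_le fun e he => ?_
    rw [Set.mem_preimage, Set.mem_singleton_iff] at hx he
    simpa only [fsPreimage, hx, he] using hfg e x

theorem unitInterval.le_of_forall_qcoin {a b : I}
    (h : ∀ α : I, 0 < α → 1 < (α : ℝ) + b → 1 < (α : ℝ) + a) : b ≤ a := by
  by_contra! hab
  have hpos : 0 < symm a := by
    rw [← symm_one]
    exact symm_lt_symm.mpr (hab.trans_le le_one')
  have hq : 1 < (symm a : ℝ) + b := by
    rw [coe_symm_eq]
    linarith [Subtype.coe_lt_coe.mpr hab]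
  linarith [coe_symm_eq a, h _ hpos hq]

theorem FSTopology.mem_opens_of_forall_qnbd {X E : Type*} (τ : FSTopology X E) (f : FSS X E)
    (h : ∀ (e : E) (x : X) (α : I), 0 < α → 1 < (α : ℝ) + f e x →
      ∃ g ∈ τ.opens, 1 < (α : ℝ) + g e x ∧ g ≤ f) :
    f ∈ τ.opens := by
  set S : Set (FSS X E) := {g | g ∈ τ.opens ∧ g ≤ f}
  suffices hf : f = fun e x => ⨆ g ∈ S, g e x by
    rw [hf]
    exact τ.sSup_mem S fun g hg => hg.1
  funext e x
  refine le_antisymm (unitInterval.le_of_forall_qcoin fun α hα hq => ?_)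
    (iSup₂_le fun g hg => hg.2 e x)
  obtain ⟨g, hg, hgq, hgf⟩ := h e x α hα hq
  have hle : g e x ≤ ⨆ g ∈ S, g e x := le_iSup₂_of_le g ⟨hg, hgf⟩ le_rfl
  linarith [Subtype.coe_le_coe.mpr hle]

theorem continuous_iff_qnbd {X E Y K : Type*}
    (τ₁ : FSTopology X E) (τ₂ : FSTopology Y K) (u : X → Y) (p : E → K) :
    FSContinuous τ₁ τ₂ u p ↔
      ∀ (e : E) (x : X) (α : I), 0 < α →
        ∀ g ∈ τ₂.opens, 1 < (α : ℝ) + g (p e) (u x) →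
          ∃ f ∈ τ₁.opens, 1 < (α : ℝ) + f e x ∧ fsImage u p f ≤ g := by
  constructor
  · intro hc e x α _ g hg hq
    exact ⟨fsPreimage u p g, hc g hg, hq, (fsImage_gc u p).l_u_le g⟩
  · intro h g hg
    refine τ₁.mem_opens_of_forall_qnbd _ fun e x α hα hq => ?_
    obtain ⟨f, hf, hfq, hfg⟩ := h e x α hα g hg hq
    exact ⟨f, hf, hfq, (fsImage_gc u p).le_iff_le.mp hfg⟩
end
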